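/- Let A ∈ ℚ^{m×n}, b ∈ ℚ^m and j ∈ {1,…,n} with I⁻_j(A) ≠ ∅ and I⁺_j(A) ≠ ∅, and let i ∈ I⁻_j(A) ∪ I⁺_j(A). Then the restricted projection fmpproj(A,b,j,i) is satisfiable (i.e. some x ∈ ℝ^n satisfies it) if and only if there exists x ∈ ℝ^n satisfying both A x ≤ b and the equality A_{i,−} x = b_i. -/
import Mathlib


/-- An assignment `x ∈ ℝ^n` satisfies the system `A x ≤ b` (componentwise). -/
def SatSys {ι : Type*} [Fintype ι] {n : ℕ} (A : Matrix ι (Fin n) ℚ) (b : ι → ℚ)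
    (x : Fin n → ℝ) : Prop :=
  ∀ i, ∑ k, (A i k : ℝ) * x k ≤ (b i : ℝ)

/-- The `k`-th standard unit row vector. -/
def unitRow {ι : Type*} [DecidableEq ι] (k : ι) : ι → ℚ :=
  fun l => if l = k then 1 else 0

/-- The projection matrix `F ∈ ℚ^{(m−1)×m}` of the restricted projection of `x_j`
with respect to the designated row `i`: its rows, indexed by `i' ≠ i`, are
`(1/A_{i,j})·e_i − (1/A_{i',j})·e_{i'}` for `i' ∈ I⁻_j(A)\{i}`,
`−(1/A_{i,j})·e_i + (1/A_{i',j})·e_{i'}` for `i' ∈ I⁺_j(A)\{i}`, and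
`e_{i'}` for `i' ∈ N_j(A)`. -/
def projMatrix {m n : ℕ} (A : Matrix (Fin m) (Fin n) ℚ) (j : Fin n) (i : Fin m) :
    Matrix {i' : Fin m // i' ≠ i} (Fin m) ℚ :=
  Matrix.of fun i' =>
    if A i'.1 j < 0 then (A i j)⁻¹ • unitRow i - (A i'.1 j)⁻¹ • unitRow i'.1
    else if 0 < A i'.1 j then (A i'.1 j)⁻¹ • unitRow i'.1 - (A i j)⁻¹ • unitRow i
    else unitRow i'.1

/-- `x` satisfies the restricted projection `fmpproj(A,b,j,i)`, i.e. the system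
`(F A) x ≤ F b` for the projection matrix `F` w.r.t. `j` and the designated row `i`. -/
def SatProj {m n : ℕ} (A : Matrix (Fin m) (Fin n) ℚ) (b : Fin m → ℚ) (j : Fin n)
    (i : Fin m) (x : Fin n → ℝ) : Prop :=
  SatSys (projMatrix A j i * A) ((projMatrix A j i).mulVec b) x

lemma sum_mul_comm_helper {m n : ℕ} (A : Matrix (Fin m) (Fin n) ℚ) (f : Fin m → ℚ)
    (x : Fin n → ℝ) :
    ∑ k, ((∑ l, f l * A l k : ℚ) : ℝ) * x k
      = ∑ l, (f l : ℝ) * ∑ k, (A l k : ℝ) * x k := by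
  push_cast
  simp_rw [Finset.sum_mul, Finset.mul_sum, mul_assoc]
  exact Finset.sum_comm

lemma unit_row_sum {m : ℕ} (p : Fin m) (g : Fin m → ℝ) :
    ∑ l, ((unitRow p l : ℚ) : ℝ) * g l = g p := by
  simp [unitRow, apply_ite (fun q : ℚ => (q : ℝ))]

lemma sub_row_sum {m : ℕ} (c c' : ℚ) (p q : Fin m) (g : Fin m → ℝ) :
    ∑ l, (((c • unitRow p - c' • unitRow q) l : ℚ) : ℝ) * g l
      = (c : ℝ) * g p - (c' : ℝ) * g q := by
  simp only [Pi.sub_apply, Pi.smul_apply, smul_eq_mul]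
  push_cast
  simp_rw [sub_mul, Finset.sum_sub_distrib, mul_assoc]
  rw [← Finset.mul_sum, ← Finset.mul_sum, unit_row_sum, unit_row_sum]

lemma proj_row_sum {m n : ℕ} (A : Matrix (Fin m) (Fin n) ℚ) (j : Fin n) (i : Fin m)
    (i' : Fin m) (hne : i' ≠ i) (g : Fin m → ℝ) :
    ∑ l, ((projMatrix A j i ⟨i', hne⟩ l : ℚ) : ℝ) * g l =
      if A i' j < 0 then ((A i j : ℝ))⁻¹ * g i - ((A i' j : ℝ))⁻¹ * g i'
      else if 0 < A i' j then ((A i' j : ℝ))⁻¹ * g i' - ((A i j : ℝ))⁻¹ * g i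
      else g i' := by
  by_cases h1 : A i' j < 0
  · simp only [projMatrix, Matrix.of_apply, if_pos h1]
    rw [sub_row_sum]; push_cast; ring
  · by_cases h2 : 0 < A i' j
    · simp only [projMatrix, Matrix.of_apply, if_neg h1, if_pos h2]
      rw [sub_row_sum]; push_cast; ring
    · simp only [projMatrix, Matrix.of_apply, if_neg h1, if_neg h2]
      rw [unit_row_sum]

lemma satProj_iff {m n : ℕ} (A : Matrix (Fin m) (Fin n) ℚ) (b : Fin m → ℚ) (j : Fin n)
    (i : Fin m) (x : Fin n → ℝ) :
    SatProj A b j i x ↔ ∀ (i' : Fin m) (hne : i' ≠ i),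
      ∑ l, ((projMatrix A j i ⟨i', hne⟩ l : ℚ) : ℝ) * (∑ k, (A l k : ℝ) * x k)
        ≤ ∑ l, ((projMatrix A j i ⟨i', hne⟩ l : ℚ) : ℝ) * (b l : ℝ) := by
  unfold SatProj SatSys
  constructor
  · intro h i' hne
    have := h ⟨i', hne⟩
    simp only [Matrix.mul_apply, Matrix.mulVec, dotProduct] at this
    rw [sum_mul_comm_helper] at this
    convert this using 1
    push_cast; rfl
  · intro h i'
    have := h i'.1 i'.2
    simp only [Matrix.mul_apply, Matrix.mulVec, dotProduct]
    rw [sum_mul_comm_helper]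
    convert this using 2
    push_cast; rfl

/-- The restricted projection `fmpproj(A,b,j,i)` is satisfiable iff some `x ∈ ℝ^n`
satisfies both `A x ≤ b` and the equality `A_{i,−} x = b_i`. -/
theorem restricted_projection_sat_iff {m n : ℕ} (A : Matrix (Fin m) (Fin n) ℚ)
    (b : Fin m → ℚ) (j : Fin n)
    (hl : ∃ ℓ, A ℓ j < 0) (hu : ∃ u, 0 < A u j)
    (i : Fin m) (hi : A i j < 0 ∨ 0 < A i j) :
    (∃ x : Fin n → ℝ, SatProj A b j i x) ↔
      ∃ x : Fin n → ℝ, (∀ i', ∑ k, (A i' k : ℝ) * x k ≤ (b i' : ℝ)) ∧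
        ∑ k, (A i k : ℝ) * x k = (b i : ℝ) := by
  have haQ : A i j ≠ 0 := by rcases hi with h | h; exact ne_of_lt h; exact ne_of_gt h
  have ha : (A i j : ℝ) ≠ 0 := by exact_mod_cast haQ
  constructor
  · rintro ⟨x, hx⟩
    rw [satProj_iff] at hx
    -- construct y from x by adjusting coordinate j
    set d : ℝ := ((b i : ℝ) - ∑ k, (A i k : ℝ) * x k) / (A i j : ℝ) with hd
    set y : Fin n → ℝ := Function.update x j (x j + d) with hy
    have hyk : ∀ k, k ≠ j → y k = x k := by
      intro k hk; simp [hy, Function.update_of_ne hk]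
    have hyj : y j = x j + d := by simp [hy]
    have hS : ∀ l : Fin m, ∑ k, (A l k : ℝ) * y k
        = (∑ k, (A l k : ℝ) * x k) + (A l j : ℝ) * d := by
      intro l
      have h1 : (∑ k, (A l k : ℝ) * y k) - ∑ k, (A l k : ℝ) * x k
          = ∑ k, (A l k : ℝ) * (y k - x k) := by
        rw [← Finset.sum_sub_distrib]; congr 1; funext k; ring
      have h2 : ∑ k, (A l k : ℝ) * (y k - x k) = (A l j : ℝ) * (y j - x j) := by
        refine Finset.sum_eq_single j (fun k _ hk => by rw [hyk k hk]; ring) (by simp)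
      rw [hyj] at h2
      have := h1.trans h2
      linarith [this]
    have had : (A i j : ℝ) * d = (b i : ℝ) - ∑ k, (A i k : ℝ) * x k := by
      rw [hd]; field_simp
    have hSi : ∑ k, (A i k : ℝ) * y k = (b i : ℝ) := by
      rw [hS i, had]; ring
    refine ⟨y, fun i' => ?_, hSi⟩
    by_cases hne : i' = i
    · subst hne; exact le_of_eq hSi
    · have key := hx i' hne
      rw [proj_row_sum, proj_row_sum] at key
      have huA : ((A i j : ℝ))⁻¹ * (A i j : ℝ) = 1 := inv_mul_cancel₀ ha
      rw [hS i']
      by_cases h1 : A i' j < 0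
      · simp only [if_pos h1] at key
        have ha' : (A i' j : ℝ) < 0 := by exact_mod_cast h1
        have ha'0 : (A i' j : ℝ) ≠ 0 := ne_of_lt ha'
        have hu'A : ((A i' j : ℝ))⁻¹ * (A i' j : ℝ) = 1 := inv_mul_cancel₀ ha'0
        -- key : a⁻¹ * Sx i - a'⁻¹ * Sx i' ≤ a⁻¹ * b i - a'⁻¹ * b i'
        have e1 : ((A i j : ℝ))⁻¹ * (∑ k, (A i k : ℝ) * x k)
            = ((A i j : ℝ))⁻¹ * (b i : ℝ) - d := by
          have : (∑ k, (A i k : ℝ) * x k) = (b i : ℝ) - (A i j : ℝ) * d := by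
            linarith [had]
          rw [this, mul_sub, ← mul_assoc, huA]; ring
        rw [e1] at key
        -- key : a⁻¹ b i - d - a'⁻¹ Sx i' ≤ a⁻¹ b i - a'⁻¹ b i'
        have h3 : ((A i' j : ℝ))⁻¹ * ((b i' : ℝ) - ∑ k, (A i' k : ℝ) * x k) ≤ d := by
          rw [mul_sub]; linarith
        have h4 := mul_le_mul_of_nonpos_left h3 (le_of_lt ha')
        rw [← mul_assoc, mul_inv_cancel₀ ha'0, one_mul] at h4
        linarith
      · by_cases h2 : 0 < A i' j
        · simp only [if_neg h1, if_pos h2] at key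
          have ha' : (0 : ℝ) < (A i' j : ℝ) := by exact_mod_cast h2
          have ha'0 : (A i' j : ℝ) ≠ 0 := ne_of_gt ha'
          have e1 : ((A i j : ℝ))⁻¹ * (∑ k, (A i k : ℝ) * x k)
              = ((A i j : ℝ))⁻¹ * (b i : ℝ) - d := by
            have : (∑ k, (A i k : ℝ) * x k) = (b i : ℝ) - (A i j : ℝ) * d := by
              linarith [had]
            rw [this, mul_sub, ← mul_assoc, huA]; ring
          rw [e1] at key
          -- key : a'⁻¹ Sx i' - (a⁻¹ b i - d) ≤ a'⁻¹ b i' - a⁻¹ b i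
          have h3 : ((A i' j : ℝ))⁻¹ * (∑ k, (A i' k : ℝ) * x k)
              ≤ ((A i' j : ℝ))⁻¹ * (b i' : ℝ) - d := by linarith
          have h4 := mul_le_mul_of_nonneg_left h3 (le_of_lt ha')
          rw [← mul_assoc, mul_inv_cancel₀ ha'0, one_mul, mul_sub, ← mul_assoc,
            mul_inv_cancel₀ ha'0, one_mul] at h4
          linarith
        · simp only [if_neg h1, if_neg h2] at key
          have h0 : A i' j = 0 := le_antisymm (not_lt.1 h2) (not_lt.1 h1)
          rw [h0]; push_cast; linarith
  · rintro ⟨x, hx, heq⟩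
    refine ⟨x, ?_⟩
    rw [satProj_iff]
    intro i' hne
    rw [proj_row_sum, proj_row_sum]
    by_cases h1 : A i' j < 0
    · rw [if_pos h1, if_pos h1, heq]
      have ha' : (A i' j : ℝ) < 0 := by exact_mod_cast h1
      have : ((A i' j : ℝ))⁻¹ < 0 := inv_neg''.2 ha'
      have := mul_le_mul_of_nonpos_left (hx i') (le_of_lt this)
      linarith
    · by_cases h2 : 0 < A i' j
      · rw [if_neg h1, if_pos h2, if_neg h1, if_pos h2, heq]
        have ha' : (0 : ℝ) < (A i' j : ℝ) := by exact_mod_cast h2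
        have : (0 : ℝ) < ((A i' j : ℝ))⁻¹ := inv_pos.2 ha'
        have := mul_le_mul_of_nonneg_left (hx i') (le_of_lt this)
        linarith
      · rw [if_neg h1, if_neg h2, if_neg h1, if_neg h2]
        exact hx i'
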